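/- arXiv:2201.10440 — 5 statements merged into one kernel-verified Lean document; each statement's English description precedes it below -/
import Mathlib

section
/- If x, y, a, b and h are five positive real numbers such that (1 + 1/h)x − (1/h)y ≤ a + b, then (1 + 1/h)x² − (1/h)y² ≤ 2(a² + b²). -/
/-- **Lemma 3.2.** If `x, y, a, b, h` are five positive real numbers such that
`(1 + 1/h)x - (1/h)y ≤ a + b`, then `(1 + 1/h)x² - (1/h)y² ≤ 2(a² + b²)`. -/
theorem stmt_1 (x y a b h : ℝ) (hx : 0 < x) (hy : 0 < y) (ha : 0 < a) (hb : 0 < b)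
    (hh : 0 < h) (hineq : (1 + 1/h) * x - (1/h) * y ≤ a + b) :
    (1 + 1/h) * x^2 - (1/h) * y^2 ≤ 2 * (a^2 + b^2) := by
  set t : ℝ := 1/h with ht
  have htpos : 0 < t := by positivity
  rcases le_or_gt 0 ((1+t)*x - t*y) with hs | hs
  · have h1 : ((1+t)*x - t*y)^2 ≤ (a+b)^2 := by
      apply sq_le_sq' <;> nlinarith
    have h2 : (1+t)*x^2 - t*y^2 ≤ ((1+t)*x - t*y)^2 := by
      nlinarith [mul_nonneg (mul_nonneg htpos.le (by linarith : (0:ℝ) ≤ 1+t))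
        (sq_nonneg (x - y))]
    nlinarith [sq_nonneg (a - b)]
  · nlinarith [mul_neg_of_neg_of_pos hs hx, mul_neg_of_neg_of_pos hs hy,
      mul_pos htpos hy, mul_pos htpos hx, sq_nonneg a, sq_nonneg b]
end

section
/- Let f : [0,a_†] → ℝ be four times continuously differentiable with |f⁗(x)| ≤ K for all x ∈ [0,a_†]. Then there exists a constant C > 0 depending only on a_† and K (independent of M', hence of h) such that |∫_0^{a_†} f(x)dx − Q_h(f(x_1),…,f(x_{M−1}))| ≤ C·h⁴. -/
/-!
Both panel rules in `Qh` — Simpson's rule on `[a, a + 2h]` and Milne's open Newton–Cotes rule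
`(4h/3)(2f(a+h) - f(a+2h) + 2f(a+3h))` on `[a, a + 4h]` — integrate cubics exactly. Replacing `f`
on a panel by its cubic Taylor polynomial therefore costs only the Taylor remainder, which is
`O(K h⁴)` uniformly on the panel, and the panel error is `O(K h⁵)`. Two end panels and `M' - 1`
Simpson panels with `M' h ≤ a†/2` add up to `O(K a† h⁴)`.
-/

open scoped BigOperators

noncomputable section

/-- Composite quadrature rule `Q_h`. -/
def Qh (h : ℝ) (M' : ℕ) (V : ℕ → ℝ) : ℝ :=
  (4*h/3) * (2*V 1 - V 2 + 2*V 3)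
    + (h/3) * ∑ i ∈ Finset.Icc 2 M', (V (2*i) + 4*V (2*i+1) + V (2*i+2))
    + (4*h/3) * (2*V (2*M'+3) - V (2*M'+4) + 2*V (2*M'+5))

open Set Finset
open scoped Nat

namespace Quadrature

variable {f : ℝ → ℝ} {s : Set ℝ} {a b K : ℝ}

theorem integral_sub_pow (a b : ℝ) (k : ℕ) :
    ∫ y in a..b, (y - a) ^ k = (b - a) ^ (k + 1) / (k + 1) := by
  simp [intervalIntegral.integral_comp_sub_right fun y => y ^ k, integral_pow]

theorem iteratedDerivWithin_Icc_eq {n : ℕ} (hab : a < b) (hs : UniqueDiffOn ℝ s)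
    (hsub : Icc a b ⊆ s) (hf : ContDiffOn ℝ n f s) {y : ℝ} (hy : y ∈ Icc a b) :
    iteratedDerivWithin n f (Icc a b) y = iteratedDerivWithin n f s y := by
  simp only [iteratedDerivWithin_eq_iteratedFDerivWithin,
    iteratedFDerivWithin_subset hsub (uniqueDiffOn_Icc hab) hs hf hy]

theorem abs_sub_taylorWithinEval_le (hab : a < b) (hs : UniqueDiffOn ℝ s)
    (hsub : Icc a b ⊆ s) (hf : ContDiffOn ℝ 4 f s)
    (hK : ∀ y ∈ Icc a b, |iteratedDerivWithin 4 f s y| ≤ K) {y : ℝ} (hy : y ∈ Icc a b) :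
    |f y - taylorWithinEval f 3 (Icc a b) a y| ≤ K * (b - a) ^ 4 / 6 := by
  have hK' : ∀ z ∈ Icc a b, ‖iteratedDerivWithin (3 + 1) f (Icc a b) z‖ ≤ K := by
    intro z hz
    rw [Real.norm_eq_abs, iteratedDerivWithin_Icc_eq hab hs hsub hf hz]
    exact hK z hz
  have hrem := taylor_mean_remainder_bound hab.le (hf.mono hsub) hy hK'
  have hK0 : 0 ≤ K := (abs_nonneg _).trans (hK a (left_mem_Icc.2 hab.le))
  have hya : 0 ≤ y - a := sub_nonneg.2 hy.1
  calc |f y - taylorWithinEval f 3 (Icc a b) a y| ≤ K * (y - a) ^ 4 / 6 := by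
        simpa [Nat.factorial] using hrem
    _ ≤ K * (b - a) ^ 4 / 6 := by gcongr; exact hy.2

theorem taylorWithinEval_eq_sum (f : ℝ → ℝ) (n : ℕ) (s : Set ℝ) (a y : ℝ) :
    taylorWithinEval f n s a y =
      ∑ k ∈ range (n + 1), iteratedDerivWithin k f s a / k ! * (y - a) ^ k := by
  rw [taylor_within_apply]
  refine sum_congr rfl fun k _ => ?_
  rw [smul_eq_mul]
  ring

theorem integral_cubic_eq_sum {n : ℕ} (w x : Fin n → ℝ)
    (hexact : ∀ k < 4, ∫ y in a..b, (y - a) ^ k = ∑ j, w j * (x j - a) ^ k)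
    (c : ℕ → ℝ) :
    ∫ y in a..b, ∑ k ∈ range 4, c k * (y - a) ^ k =
      ∑ j, w j * ∑ k ∈ range 4, c k * (x j - a) ^ k := by
  rw [intervalIntegral.integral_finsetSum fun k _ => by
    exact (by fun_prop : Continuous fun y => c k * (y - a) ^ k).intervalIntegrable _ _]
  simp_rw [intervalIntegral.integral_const_mul]
  calc ∑ k ∈ range 4, c k * ∫ y in a..b, (y - a) ^ k
      = ∑ k ∈ range 4, c k * ∑ j, w j * (x j - a) ^ k :=
        sum_congr rfl fun k hk => by rw [hexact k (mem_range.1 hk)]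
    _ = _ := by
        simp_rw [mul_sum]
        rw [sum_comm]
        exact sum_congr rfl fun j _ => sum_congr rfl fun k _ => by ring

theorem abs_integral_sub_quadrature_le {n : ℕ} (w x : Fin n → ℝ) (hab : a < b)
    (hs : UniqueDiffOn ℝ s) (hsub : Icc a b ⊆ s) (hf : ContDiffOn ℝ 4 f s)
    (hK : ∀ y ∈ Icc a b, |iteratedDerivWithin 4 f s y| ≤ K) (hx : ∀ j, x j ∈ Icc a b)
    (hexact : ∀ k < 4, ∫ y in a..b, (y - a) ^ k = ∑ j, w j * (x j - a) ^ k) :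
    |(∫ y in a..b, f y) - ∑ j, w j * f (x j)| ≤
      (b - a + ∑ j, |w j|) * (K * (b - a) ^ 4 / 6) := by
  set c : ℕ → ℝ := fun k => iteratedDerivWithin k f (Icc a b) a / (k ! : ℝ)
  set P : ℝ → ℝ := fun y => ∑ k ∈ range 4, c k * (y - a) ^ k
  set E := K * (b - a) ^ 4 / 6
  have hfP : ∀ y ∈ Icc a b, |f y - P y| ≤ E := fun y hy => by
    have := abs_sub_taylorWithinEval_le hab hs hsub hf hK hy
    rwa [taylorWithinEval_eq_sum] at this
  have hfi : IntervalIntegrable f MeasureTheory.volume a b :=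
    (hf.continuousOn.mono ((uIcc_of_le hab.le).trans_subset hsub)).intervalIntegrable
  have hPi : IntervalIntegrable P MeasureTheory.volume a b :=
    (by fun_prop : Continuous P).intervalIntegrable _ _
  have hsplit : (∫ y in a..b, f y) - ∑ j, w j * f (x j) =
      (∫ y in a..b, (f y - P y)) - ∑ j, w j * (f (x j) - P (x j)) := by
    rw [intervalIntegral.integral_sub hfi hPi, integral_cubic_eq_sum w x hexact c]
    simp only [P, mul_sub, sum_sub_distrib]
    ring
  have hint : |∫ y in a..b, (f y - P y)| ≤ E * (b - a) := by
    have := intervalIntegral.norm_integral_le_of_norm_le_const (f := fun y => f y - P y)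
      (a := a) (b := b) (C := E) fun y hy =>
        hfP y (Ioc_subset_Icc_self (by rwa [uIoc_of_le hab.le] at hy))
    rwa [abs_of_pos (sub_pos.2 hab)] at this
  have hrule : |∑ j, w j * (f (x j) - P (x j))| ≤ ∑ j, |w j| * E :=
    (abs_sum_le_sum_abs _ _).trans <| sum_le_sum fun j _ => by
      rw [abs_mul]
      exact mul_le_mul_of_nonneg_left (hfP _ (hx j)) (abs_nonneg _)
  rw [hsplit, add_mul, sum_mul, mul_comm (b - a)]
  exact (abs_sub _ _).trans (add_le_add hint hrule)

def simpsonRule (f : ℝ → ℝ) (a δ : ℝ) : ℝ :=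
  δ / 3 * (f a + 4 * f (a + δ) + f (a + 2 * δ))

def milneRule (f : ℝ → ℝ) (a δ : ℝ) : ℝ :=
  4 * δ / 3 * (2 * f (a + δ) - f (a + 2 * δ) + 2 * f (a + 3 * δ))

variable {δ : ℝ}

theorem abs_integral_sub_simpsonRule_le (hδ : 0 < δ) (hs : UniqueDiffOn ℝ s)
    (hsub : Icc a (a + 2 * δ) ⊆ s) (hf : ContDiffOn ℝ 4 f s)
    (hK : ∀ y ∈ Icc a (a + 2 * δ), |iteratedDerivWithin 4 f s y| ≤ K) :
    |(∫ y in a..a + 2 * δ, f y) - simpsonRule f a δ| ≤ 32 / 3 * K * δ ^ 5 := by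
  have h := abs_integral_sub_quadrature_le ![δ / 3, 4 * δ / 3, δ / 3] ![a, a + δ, a + 2 * δ]
    (by linarith) hs hsub hf hK ?nodes ?exact
  case nodes =>
    simp only [Fin.forall_fin_succ, Set.mem_Icc, Matrix.cons_val_zero, Matrix.cons_val_succ,
      IsEmpty.forall_iff, and_true]
    refine ⟨⟨?_, ?_⟩, ⟨?_, ?_⟩, ?_, ?_⟩ <;> linarith
  case exact =>
    intro k hk
    rw [integral_sub_pow]
    interval_cases k <;> simp only [Fin.sum_univ_three, Matrix.cons_val] <;> ring
  convert h using 1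
  · congr 2
    simp only [simpsonRule, Fin.sum_univ_three, Matrix.cons_val]
    ring
  · simp only [Fin.sum_univ_three, Matrix.cons_val]
    rw [abs_of_pos (by positivity : 0 < δ / 3), abs_of_pos (by positivity : 0 < 4 * δ / 3)]
    ring

theorem abs_integral_sub_milneRule_le (hδ : 0 < δ) (hs : UniqueDiffOn ℝ s)
    (hsub : Icc a (a + 4 * δ) ⊆ s) (hf : ContDiffOn ℝ 4 f s)
    (hK : ∀ y ∈ Icc a (a + 4 * δ), |iteratedDerivWithin 4 f s y| ≤ K) :
    |(∫ y in a..a + 4 * δ, f y) - milneRule f a δ| ≤ 4096 / 9 * K * δ ^ 5 := by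
  have h := abs_integral_sub_quadrature_le ![8 * δ / 3, -(4 * δ / 3), 8 * δ / 3]
    ![a + δ, a + 2 * δ, a + 3 * δ] (by linarith) hs hsub hf hK ?nodes ?exact
  case nodes =>
    simp only [Fin.forall_fin_succ, Set.mem_Icc, Matrix.cons_val_zero, Matrix.cons_val_succ,
      IsEmpty.forall_iff, and_true]
    refine ⟨⟨?_, ?_⟩, ⟨?_, ?_⟩, ?_, ?_⟩ <;> linarith
  case exact =>
    intro k hk
    rw [integral_sub_pow]
    interval_cases k <;> simp only [Fin.sum_univ_three, Matrix.cons_val] <;> ring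
  convert h using 1
  · congr 2
    simp only [milneRule, Fin.sum_univ_three, Matrix.cons_val]
    ring
  · simp only [Fin.sum_univ_three, Matrix.cons_val, abs_neg]
    rw [abs_of_pos (by positivity : 0 < 8 * δ / 3), abs_of_pos (by positivity : 0 < 4 * δ / 3)]
    ring

theorem Qh_eq_milneRule_add_sum_simpsonRule (f : ℝ → ℝ) (h : ℝ) (M' : ℕ) :
    Qh h M' (fun i => f (i * h)) =
      milneRule f 0 h + ∑ i ∈ Icc 2 M', simpsonRule f (2 * i * h) h +
        milneRule f ((2 * M' + 2) * h) h := by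
  simp only [Qh, milneRule, simpsonRule, mul_sum]
  push_cast
  ring_nf

theorem integral_eq_sum_panels {M' : ℕ} (hM' : 0 < M') {h : ℝ} (hh : 0 ≤ h)
    (hf : ContinuousOn f (Icc 0 ((2 * M' + 6) * h))) :
    ∫ x in 0..(2 * M' + 6) * h, f x =
      (∫ x in 0..0 + 4 * h, f x) +
        (∑ i ∈ Icc 2 M', ∫ x in 2 * i * h..2 * i * h + 2 * h, f x) +
        ∫ x in (2 * M' + 2) * h..(2 * M' + 2) * h + 4 * h, f x := by
  set g : ℕ → ℝ := fun k => 2 * k * h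
  have hg : ∀ k ≤ M' + 3, g k ∈ Icc 0 ((2 * M' + 6) * h) := fun k hk => by
    have : (k : ℝ) ≤ M' + 3 := by exact_mod_cast hk
    exact ⟨by positivity, by nlinarith⟩
  have hI : ∀ k ≤ M' + 3, ∀ l ≤ M' + 3,
      IntervalIntegrable f MeasureTheory.volume (g k) (g l) :=
    fun k hk l hl => (hf.mono (uIcc_subset_Icc (hg k hk) (hg l hl))).intervalIntegrable
  have hsum : ∑ i ∈ Icc 2 M', ∫ x in 2 * i * h..2 * i * h + 2 * h, f x =
      ∫ x in g 2..g (M' + 1), f x := by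
    rw [← Finset.Ico_add_one_right_eq_Icc,
      ← intervalIntegral.sum_integral_adjacent_intervals_Ico (by omega) fun k hk =>
        hI k (by have := hk.2; omega) (k + 1) (by have := hk.2; omega)]
    refine sum_congr rfl fun i _ => ?_
    simp only [g]
    push_cast
    ring_nf
  rw [hsum, show (0 : ℝ) + 4 * h = g 2 by push_cast [g]; ring,
    show (2 * M' + 2) * h + 4 * h = g (M' + 3) by push_cast [g]; ring,
    show (2 * M' + 6) * h = g (M' + 3) by push_cast [g]; ring,
    show (2 * M' + 2) * h = g (M' + 1) by push_cast [g]; ring,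
    show (0 : ℝ) = g 0 by push_cast [g]; ring,
    intervalIntegral.integral_add_adjacent_intervals
      (hI 0 (by omega) 2 (by omega)) (hI 2 (by omega) (M' + 1) (by omega)),
    intervalIntegral.integral_add_adjacent_intervals
      (hI 0 (by omega) (M' + 1) (by omega)) (hI (M' + 1) (by omega) (M' + 3) (by omega))]

theorem abs_integral_sub_Qh_le {M' : ℕ} (hM' : 0 < M') {h : ℝ} (hh : 0 < h)
    (hf : ContDiffOn ℝ 4 f (Icc 0 ((2 * M' + 6) * h)))
    (hK : ∀ x ∈ Icc 0 ((2 * M' + 6) * h),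
      |iteratedDerivWithin 4 f (Icc 0 ((2 * M' + 6) * h)) x| ≤ K) :
    |(∫ x in 0..(2 * M' + 6) * h, f x) - Qh h M' (fun i => f (i * h))| ≤
      (8192 / 9 + 32 / 3 * M') * K * h ^ 5 := by
  have hs : UniqueDiffOn ℝ (Icc 0 ((2 * M' + 6) * h)) := uniqueDiffOn_Icc (by positivity)
  have hsub : ∀ {u v : ℝ}, 0 ≤ u → v ≤ (2 * M' + 6) * h →
      Icc u v ⊆ Icc 0 ((2 * M' + 6) * h) :=
    fun hu hv => Icc_subset_Icc hu hv
  have hKsub : ∀ {u v : ℝ}, 0 ≤ u → v ≤ (2 * M' + 6) * h → ∀ y ∈ Icc u v,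
      |iteratedDerivWithin 4 f (Icc 0 ((2 * M' + 6) * h)) y| ≤ K :=
    fun hu hv y hy => hK y (hsub hu hv hy)
  have hfirst := abs_integral_sub_milneRule_le hh hs (hsub le_rfl (by nlinarith)) hf
    (hKsub le_rfl (by nlinarith))
  have hlast := abs_integral_sub_milneRule_le (a := (2 * M' + 2) * h) hh hs
    (hsub (by positivity) (by linarith)) hf (hKsub (by positivity) (by linarith))
  have hmid : ∀ i ∈ Finset.Icc 2 M',
      |(∫ x in 2 * i * h..2 * i * h + 2 * h, f x) - simpsonRule f (2 * i * h) h| ≤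
        32 / 3 * K * h ^ 5 := fun i hi => by
    have : (i : ℝ) ≤ M' := by exact_mod_cast (Finset.mem_Icc.1 hi).2
    exact abs_integral_sub_simpsonRule_le hh hs (hsub (by positivity) (by nlinarith)) hf
      (hKsub (by positivity) (by nlinarith))
  have hK0 : 0 ≤ K := (abs_nonneg _).trans (hK 0 ⟨le_rfl, by positivity⟩)
  have hcard : ((Finset.Icc 2 M').card : ℝ) ≤ M' := by simp
  rw [integral_eq_sum_panels hM' hh.le hf.continuousOn, Qh_eq_milneRule_add_sum_simpsonRule]
  calc _ = |((∫ x in 0..0 + 4 * h, f x) - milneRule f 0 h) +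
          ∑ i ∈ Icc 2 M', ((∫ x in 2 * i * h..2 * i * h + 2 * h, f x) -
            simpsonRule f (2 * i * h) h) +
          ((∫ x in (2 * M' + 2) * h..(2 * M' + 2) * h + 4 * h, f x) -
            milneRule f ((2 * M' + 2) * h) h)| := by
        rw [sum_sub_distrib]
        ring_nf
    _ ≤ 4096 / 9 * K * h ^ 5 + ∑ i ∈ Icc 2 M', 32 / 3 * K * h ^ 5 + 4096 / 9 * K * h ^ 5 :=
        (abs_add_three _ _ _).trans <|
          add_le_add_three hfirst ((abs_sum_le_sum_abs _ _).trans (sum_le_sum hmid)) hlast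
    _ ≤ _ := by
        rw [sum_const, nsmul_eq_mul]
        nlinarith [mul_le_mul_of_nonneg_right hcard (mul_nonneg hK0 (pow_pos hh 5).le)]

end Quadrature

/-- Quadrature error bound: if `f` is `C⁴` on `[0, a†]` with fourth derivative bounded by `K`,
then there is a constant `C > 0` depending only on `a†` and `K` (independent of `M'`, hence
of `h = a†/(2(M'+3))`) such that `|∫₀^{a†} f - Q_h(f(x_1),…,f(x_{M-1}))| ≤ C h⁴`. -/
theorem stmt_5 (adag K : ℝ) (ha : 0 < adag) (hK : 0 ≤ K) :
    ∃ C > 0, ∀ M' : ℕ, 0 < M' → ∀ f : ℝ → ℝ,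
      ContDiffOn ℝ 4 f (Set.Icc 0 adag) →
      (∀ x ∈ Set.Icc 0 adag, |iteratedDerivWithin 4 f (Set.Icc 0 adag) x| ≤ K) →
      |(∫ x in (0:ℝ)..adag, f x)
          - Qh (adag/(2*(M'+3) : ℝ)) M' (fun i => f ((i:ℝ) * (adag/(2*(M'+3) : ℝ))))|
        ≤ C * (adag/(2*(M'+3) : ℝ))^4 := by
  refine ⟨160 * K * adag + 1, by positivity, fun M' hM' f hf hb => ?_⟩
  set h := adag / (2 * (M' + 3) : ℝ) with h_def
  have hh : 0 < h := by positivity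
  have hadag : adag = (2 * M' + 6) * h := by
    rw [h_def]
    field_simp
    ring
  rw [hadag] at hf hb ⊢
  refine (Quadrature.abs_integral_sub_Qh_le hM' hh hf hb).trans ?_
  calc (8192 / 9 + 32 / 3 * M') * K * h ^ 5 ≤ 160 * K * ((2 * M' + 6) * h) * h ^ 4 := by
        have : 0 ≤ K * h ^ 5 := by positivity
        nlinarith
    _ ≤ (160 * K * ((2 * M' + 6) * h) + 1) * h ^ 4 := by nlinarith [pow_pos hh 4]
end
end

section
/- Let d : [0,a_†] × ℝ → ℝ satisfy |d(x,s)| ≤ D and |d(x,s) − d(x,s')| ≤ L|s − s'| for all x ∈ [0,a_†], s, s' ∈ ℝ, and let Ψ_1 ∈ ℝ^{M−1} with max_i |Ψ_{1,i}| ≤ ψ_max. Then there exists C > 0 depending only on D, L, ψ_max, C_0 and a_† (independent of h) such that for all V, W ∈ ℝ^{M−1} with ‖V‖_∞ ≤ C_0 and ‖W‖_∞ ≤ C_0, ‖(d(x_i, Q_h(Ψ_1·V))·V_i)_{i=1}^{M−1} − (d(x_i, Q_h(Ψ_1·W))·W_i)_{i=1}^{M−1}‖ ≤ C‖V − W‖.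 -/
open scoped BigOperators

noncomputable section

/-- `‖V‖² = Σ_{i=1}^{M-1} h |V_i|²`. -/
def normSq (h : ℝ) (M : ℕ) (V : ℕ → ℝ) : ℝ :=
  ∑ i ∈ Finset.Icc 1 (M-1), h * (V i)^2


lemma qh_sub (h : ℝ) (M' : ℕ) (U U' : ℕ → ℝ) :
    Qh h M' U - Qh h M' U' = Qh h M' (fun j => U j - U' j) := by
  simp only [Qh]
  rw [show (∑ i ∈ Finset.Icc 2 M', ((U (2*i) - U' (2*i)) + 4*(U (2*i+1) - U' (2*i+1))
        + (U (2*i+2) - U' (2*i+2))))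
      = (∑ i ∈ Finset.Icc 2 M', (U (2*i) + 4*U (2*i+1) + U (2*i+2)))
        - ∑ i ∈ Finset.Icc 2 M', (U' (2*i) + 4*U' (2*i+1) + U' (2*i+2)) from by
      rw [← Finset.sum_sub_distrib]; exact Finset.sum_congr rfl (fun i _ => by ring)]
  ring

lemma sum_comp_le (U : ℕ → ℝ) (s t : Finset ℕ) (f : ℕ → ℕ)
    (hinj : ∀ x ∈ s, ∀ y ∈ s, f x = f y → x = y) (hsub : ∀ i ∈ s, f i ∈ t) :
    ∑ i ∈ s, |U (f i)| ≤ ∑ j ∈ t, |U j| := by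
  rw [← Finset.sum_image (g := f) (f := fun j => |U j|) hinj]
  exact Finset.sum_le_sum_of_subset_of_nonneg
    (fun j hj => by obtain ⟨i, hi, rfl⟩ := Finset.mem_image.mp hj; exact hsub i hi)
    (fun _ _ _ => abs_nonneg _)

lemma qh_abs_le (h : ℝ) (hh : 0 ≤ h) (M' : ℕ) (U : ℕ → ℝ) :
    |Qh h M' U| ≤ 16 * ∑ i ∈ Finset.Icc 1 (2*(M'+3)-1), h * |U i| := by
  set T := ∑ i ∈ Finset.Icc 1 (2*(M'+3)-1), |U i| with hTdef
  have hTnn : 0 ≤ T := Finset.sum_nonneg (fun _ _ => abs_nonneg _)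
  have hmem : ∀ j, 1 ≤ j → j ≤ 2*(M'+3)-1 → |U j| ≤ T := fun j h1 h2 =>
    Finset.single_le_sum (f := fun i => |U i|) (fun _ _ => abs_nonneg _) (Finset.mem_Icc.mpr ⟨h1, h2⟩)
  have h1 : |U 1| ≤ T := hmem 1 (by omega) (by omega)
  have h2 : |U 2| ≤ T := hmem 2 (by omega) (by omega)
  have h3 : |U 3| ≤ T := hmem 3 (by omega) (by omega)
  have h4 : |U (2*M'+3)| ≤ T := hmem _ (by omega) (by omega)
  have h5 : |U (2*M'+4)| ≤ T := hmem _ (by omega) (by omega)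
  have h6 : |U (2*M'+5)| ≤ T := hmem _ (by omega) (by omega)
  have hs1 : ∑ i ∈ Finset.Icc 2 M', |U (2*i)| ≤ T :=
    sum_comp_le U _ _ _ (by intros; omega)
      (fun i hi => Finset.mem_Icc.mpr (by simp [Finset.mem_Icc] at hi; omega))
  have hs2 : ∑ i ∈ Finset.Icc 2 M', |U (2*i+1)| ≤ T :=
    sum_comp_le U _ _ _ (by intros; omega)
      (fun i hi => Finset.mem_Icc.mpr (by simp [Finset.mem_Icc] at hi; omega))
  have hs3 : ∑ i ∈ Finset.Icc 2 M', |U (2*i+2)| ≤ T :=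
    sum_comp_le U _ _ _ (by intros; omega)
      (fun i hi => Finset.mem_Icc.mpr (by simp [Finset.mem_Icc] at hi; omega))
  have hmid : |∑ i ∈ Finset.Icc 2 M', (U (2*i) + 4*U (2*i+1) + U (2*i+2))| ≤ 6 * T := by
    calc |∑ i ∈ Finset.Icc 2 M', (U (2*i) + 4*U (2*i+1) + U (2*i+2))|
        ≤ ∑ i ∈ Finset.Icc 2 M', |U (2*i) + 4*U (2*i+1) + U (2*i+2)| :=
          Finset.abs_sum_le_sum_abs _ _
      _ ≤ ∑ i ∈ Finset.Icc 2 M', (|U (2*i)| + 4*|U (2*i+1)| + |U (2*i+2)|) := by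
          apply Finset.sum_le_sum; intro i _
          have := abs_add_le (U (2*i) + 4*U (2*i+1)) (U (2*i+2))
          have h' := abs_add_le (U (2*i)) (4*U (2*i+1))
          have : |4*U (2*i+1)| = 4*|U (2*i+1)| := by rw [abs_mul]; norm_num
          calc |U (2*i) + 4*U (2*i+1) + U (2*i+2)|
              ≤ |U (2*i) + 4*U (2*i+1)| + |U (2*i+2)| := abs_add_le _ _
            _ ≤ |U (2*i)| + |4*U (2*i+1)| + |U (2*i+2)| := by linarith [abs_add_le (U (2*i)) (4*U (2*i+1))]
            _ = |U (2*i)| + 4*|U (2*i+1)| + |U (2*i+2)| := by rw [this]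
      _ = (∑ i ∈ Finset.Icc 2 M', |U (2*i)|) + 4*(∑ i ∈ Finset.Icc 2 M', |U (2*i+1)|)
            + ∑ i ∈ Finset.Icc 2 M', |U (2*i+2)| := by
          rw [Finset.sum_add_distrib, Finset.sum_add_distrib, Finset.mul_sum]
      _ ≤ 6 * T := by linarith
  have hend1 : |2*U 1 - U 2 + 2*U 3| ≤ 5*T := by
    have := abs_sub (2*U 1) (U 2)
    calc |2*U 1 - U 2 + 2*U 3| ≤ |2*U 1 - U 2| + |2*U 3| := abs_add_le _ _
      _ ≤ |2*U 1| + |U 2| + |2*U 3| := by linarith [abs_sub_abs_le_abs_sub (2*U 1) (U 2), abs_sub (2*U 1) (U 2)]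
      _ ≤ 5*T := by rw [abs_mul, abs_mul]; norm_num; linarith
  have hend2 : |2*U (2*M'+3) - U (2*M'+4) + 2*U (2*M'+5)| ≤ 5*T := by
    calc |2*U (2*M'+3) - U (2*M'+4) + 2*U (2*M'+5)|
        ≤ |2*U (2*M'+3) - U (2*M'+4)| + |2*U (2*M'+5)| := abs_add_le _ _
      _ ≤ |2*U (2*M'+3)| + |U (2*M'+4)| + |2*U (2*M'+5)| := by
          linarith [abs_sub (2*U (2*M'+3)) (U (2*M'+4))]
      _ ≤ 5*T := by rw [abs_mul, abs_mul]; norm_num; linarith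
  have hsum : ∑ i ∈ Finset.Icc 1 (2*(M'+3)-1), h * |U i| = h * T := by
    rw [hTdef, Finset.mul_sum]
  rw [hsum]
  have htri : |Qh h M' U| ≤ |4*h/3 * (2*U 1 - U 2 + 2*U 3)|
      + |h/3 * ∑ i ∈ Finset.Icc 2 M', (U (2*i) + 4*U (2*i+1) + U (2*i+2))|
      + |4*h/3 * (2*U (2*M'+3) - U (2*M'+4) + 2*U (2*M'+5))| := by
    unfold Qh
    exact abs_add_three _ _ _
  have e1 : |4*h/3 * (2*U 1 - U 2 + 2*U 3)| ≤ (4*h/3) * (5*T) := by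
    rw [abs_mul, abs_of_nonneg (by linarith : (0:ℝ) ≤ 4*h/3)]
    exact mul_le_mul_of_nonneg_left hend1 (by linarith)
  have e2 : |h/3 * ∑ i ∈ Finset.Icc 2 M', (U (2*i) + 4*U (2*i+1) + U (2*i+2))| ≤ (h/3) * (6*T) := by
    rw [abs_mul, abs_of_nonneg (by linarith : (0:ℝ) ≤ h/3)]
    exact mul_le_mul_of_nonneg_left hmid (by linarith)
  have e3 : |4*h/3 * (2*U (2*M'+3) - U (2*M'+4) + 2*U (2*M'+5))| ≤ (4*h/3) * (5*T) := by
    rw [abs_mul, abs_of_nonneg (by linarith : (0:ℝ) ≤ 4*h/3)]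
    exact mul_le_mul_of_nonneg_left hend2 (by linarith)
  nlinarith [mul_nonneg hh hTnn]

set_option maxHeartbeats 1000000 in
/-- Lipschitz-type bound for the nonlinear death term: if `d` is bounded by `D` and
Lipschitz with constant `L` in its second variable, and `|Ψ_{1,i}| ≤ ψ_max`, then there is
`C > 0` depending only on `D, L, ψ_max, C_0, a†` (independent of `h`) such that for all
`V, W` with `‖V‖_∞ ≤ C_0`, `‖W‖_∞ ≤ C_0`,
`‖d(xᵢ, Q_h(Ψ_1·V)) Vᵢ - d(xᵢ, Q_h(Ψ_1·W)) Wᵢ‖ ≤ C ‖V - W‖`. -/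
theorem stmt_7 (adag D L ψmax C0 : ℝ) (hadag : 0 < adag) (hD : 0 < D) (hL : 0 < L)
    (hψmax : 0 < ψmax) (hC0 : 0 < C0) (d : ℝ → ℝ → ℝ)
    (hdb : ∀ x ∈ Set.Icc 0 adag, ∀ s : ℝ, |d x s| ≤ D)
    (hdLip : ∀ x ∈ Set.Icc 0 adag, ∀ s s' : ℝ, |d x s - d x s'| ≤ L * |s - s'|) :
    ∃ C > 0, ∀ M' : ℕ, 0 < M' →
      let M := 2*(M'+3); let h := adag / (M : ℝ);
      ∀ Ψ1 : ℕ → ℝ, (∀ i, 1 ≤ i → i ≤ M-1 → |Ψ1 i| ≤ ψmax) →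
      ∀ V W : ℕ → ℝ,
        (∀ i, 1 ≤ i → i ≤ M-1 → |V i| ≤ C0) →
        (∀ i, 1 ≤ i → i ≤ M-1 → |W i| ≤ C0) →
        Real.sqrt (normSq h M (fun i =>
            d ((i:ℝ)*h) (Qh h M' (fun j => Ψ1 j * V j)) * V i
              - d ((i:ℝ)*h) (Qh h M' (fun j => Ψ1 j * W j)) * W i))
          ≤ C * Real.sqrt (normSq h M (fun i => V i - W i)) := by
  have hCsq : (0:ℝ) < 2*D^2 + 512*L^2*C0^2*ψmax^2*adag^2 := by positivity
  refine ⟨Real.sqrt (2*D^2 + 512*L^2*C0^2*ψmax^2*adag^2), Real.sqrt_pos.mpr hCsq, ?_⟩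
  intro M' hM' M h Ψ1 hΨ V W hV hW
  have hM : M = 2*(M'+3) := rfl
  have hhdef : h = adag / (M:ℝ) := rfl
  clear_value M h
  have hMpos : (0:ℝ) < (M:ℝ) := by
    have : 0 < M := by omega
    exact_mod_cast this
  have hh : 0 < h := hhdef ▸ div_pos hadag hMpos
  have hMh : (M:ℝ) * h = adag := by
    rw [hhdef]; field_simp
  set A := Qh h M' (fun j => Ψ1 j * V j) with hA
  set B := Qh h M' (fun j => Ψ1 j * W j) with hB
  set N := normSq h M (fun i => V i - W i) with hN
  clear_value A B N
  have hNnn : 0 ≤ N := by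
    rw [hN, normSq]; exact Finset.sum_nonneg fun i _ => by positivity
  set S := ∑ i ∈ Finset.Icc 1 (M-1), h * |V i - W i| with hS
  clear_value S
  have hSnn : 0 ≤ S := by
    rw [hS]; exact Finset.sum_nonneg fun i _ => by positivity
  -- (M-1)*h ≤ adag
  have hcard : ((M-1 : ℕ) : ℝ) * h ≤ adag := by
    rw [← hMh]
    have : ((M-1 : ℕ) : ℝ) ≤ (M:ℝ) := by
      have : (M-1 : ℕ) ≤ M := by omega
      exact_mod_cast this
    nlinarith
  -- Step 1: |A - B| ≤ 16 ψmax S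
  have hAB : |A - B| ≤ 16 * ψmax * S := by
    rw [hA, hB, qh_sub]
    have := qh_abs_le h hh.le M' (fun j => Ψ1 j * V j - Ψ1 j * W j)
    refine le_trans this ?_
    have hM1 : 2*(M'+3)-1 = M-1 := by omega
    rw [hM1]
    have hterm : ∀ j ∈ Finset.Icc 1 (M-1),
        h * |Ψ1 j * V j - Ψ1 j * W j| ≤ h * (ψmax * |V j - W j|) := by
      intro j hj
      rw [Finset.mem_Icc] at hj
      have : |Ψ1 j * V j - Ψ1 j * W j| = |Ψ1 j| * |V j - W j| := by
        rw [← abs_mul]; ring_nf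
      rw [this]
      exact mul_le_mul_of_nonneg_left
        (mul_le_mul_of_nonneg_right (hΨ j hj.1 hj.2) (abs_nonneg _)) hh.le
    have := Finset.sum_le_sum hterm
    have heq : ∑ j ∈ Finset.Icc 1 (M-1), h * (ψmax * |V j - W j|) = ψmax * S := by
      rw [hS, Finset.mul_sum]
      exact Finset.sum_congr rfl fun j _ => by ring
    rw [heq] at this
    linarith
  -- Step 2: Cauchy–Schwarz: S² ≤ adag * N
  have hCS : S^2 ≤ adag * N := by
    have key := Finset.sum_mul_sq_le_sq_mul_sq (Finset.Icc 1 (M-1))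
      (fun _ => Real.sqrt h) (fun i => Real.sqrt h * |V i - W i|)
    have e1 : ∑ i ∈ Finset.Icc 1 (M-1), Real.sqrt h * (Real.sqrt h * |V i - W i|) = S := by
      rw [hS]
      exact Finset.sum_congr rfl fun i _ => by
        rw [← mul_assoc, Real.mul_self_sqrt hh.le]
    have e2 : ∑ i ∈ Finset.Icc 1 (M-1), (Real.sqrt h)^2 = ((M-1:ℕ):ℝ) * h := by
      rw [Finset.sum_const, Nat.card_Icc]
      simp [Real.sq_sqrt hh.le, nsmul_eq_mul]
    have e3 : ∑ i ∈ Finset.Icc 1 (M-1), (Real.sqrt h * |V i - W i|)^2 = N := by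
      rw [hN, normSq]
      exact Finset.sum_congr rfl fun i _ => by
        rw [mul_pow, Real.sq_sqrt hh.le, sq_abs]
    rw [e1, e2, e3] at key
    calc S^2 ≤ (((M-1:ℕ):ℝ) * h) * N := key
      _ ≤ adag * N := mul_le_mul_of_nonneg_right hcard hNnn
  have hAB2 : (A - B)^2 ≤ 256 * ψmax^2 * (adag * N) := by
    have h1 : (A-B)^2 ≤ (16*ψmax*S)^2 := by
      rw [← sq_abs]
      exact pow_le_pow_left₀ (abs_nonneg _) hAB 2
    nlinarith [sq_nonneg ψmax]
  -- Step 3: pointwise bound and conclusion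
  rw [show Real.sqrt (2*D^2 + 512*L^2*C0^2*ψmax^2*adag^2) * Real.sqrt N
      = Real.sqrt ((2*D^2 + 512*L^2*C0^2*ψmax^2*adag^2) * N) from
      (Real.sqrt_mul hCsq.le N).symm]
  apply Real.sqrt_le_sqrt
  rw [normSq]
  have hptwise : ∀ i ∈ Finset.Icc 1 (M-1),
      h * (d ((i:ℝ)*h) A * V i - d ((i:ℝ)*h) B * W i)^2
        ≤ h * (2*D^2*(V i - W i)^2 + 2*L^2*C0^2*(A-B)^2) := by
    intro i hi
    rw [Finset.mem_Icc] at hi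
    have hx : ((i:ℝ)*h) ∈ Set.Icc 0 adag := by
      constructor
      · positivity
      · rw [← hMh]
        have : ((i:ℕ):ℝ) ≤ (M:ℝ) := by exact_mod_cast (by omega : i ≤ M)
        nlinarith
    have hd1 : |d ((i:ℝ)*h) A| ≤ D := hdb _ hx A
    have hd2 : |d ((i:ℝ)*h) A - d ((i:ℝ)*h) B| ≤ L * |A - B| := hdLip _ hx A B
    have hWi : |W i| ≤ C0 := hW i hi.1 hi.2
    have habs : |d ((i:ℝ)*h) A * V i - d ((i:ℝ)*h) B * W i|
        ≤ D * |V i - W i| + L * |A-B| * C0 := by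
      have hsplit : d ((i:ℝ)*h) A * V i - d ((i:ℝ)*h) B * W i
          = d ((i:ℝ)*h) A * (V i - W i) + (d ((i:ℝ)*h) A - d ((i:ℝ)*h) B) * W i := by ring
      rw [hsplit]
      refine le_trans (abs_add_le _ _) ?_
      rw [abs_mul, abs_mul]
      have t1 : |d ((i:ℝ)*h) A| * |V i - W i| ≤ D * |V i - W i| :=
        mul_le_mul_of_nonneg_right hd1 (abs_nonneg _)
      have t2 : |d ((i:ℝ)*h) A - d ((i:ℝ)*h) B| * |W i| ≤ L * |A-B| * C0 :=
        mul_le_mul hd2 hWi (abs_nonneg _) (by positivity)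
      linarith
    have hsq : (d ((i:ℝ)*h) A * V i - d ((i:ℝ)*h) B * W i)^2
        ≤ 2*D^2*(V i - W i)^2 + 2*L^2*C0^2*(A-B)^2 := by
      have h0 : (d ((i:ℝ)*h) A * V i - d ((i:ℝ)*h) B * W i)^2
          ≤ (D * |V i - W i| + L * |A-B| * C0)^2 := by
        rw [← sq_abs]
        exact pow_le_pow_left₀ (abs_nonneg _) habs 2
      have key : ∀ x y : ℝ, (x + y)^2 ≤ 2*x^2 + 2*y^2 := fun x y => by
        nlinarith [sq_nonneg (x - y)]
      have h1 := key (D * |V i - W i|) (L * |A-B| * C0)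
      have e4 : (D * |V i - W i|)^2 = D^2 * (V i - W i)^2 := by
        rw [mul_pow, sq_abs]
      have e5 : (L * |A-B| * C0)^2 = L^2 * C0^2 * (A-B)^2 := by
        rw [mul_pow, mul_pow, sq_abs]; ring
      rw [e4, e5] at h1
      linarith
    exact mul_le_mul_of_nonneg_left hsq hh.le
  refine le_trans (Finset.sum_le_sum hptwise) ?_
  have hsplit2 : ∑ i ∈ Finset.Icc 1 (M-1), h * (2*D^2*(V i - W i)^2 + 2*L^2*C0^2*(A-B)^2)
      = 2*D^2 * N + 2*L^2*C0^2*(A-B)^2 * (((M-1:ℕ):ℝ) * h) := by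
    have e6 : ∑ i ∈ Finset.Icc 1 (M-1), h * (2*D^2*(V i - W i)^2 + 2*L^2*C0^2*(A-B)^2)
        = ∑ i ∈ Finset.Icc 1 (M-1),
          (2*D^2 * (h * (V i - W i)^2) + 2*L^2*C0^2*(A-B)^2 * h) :=
      Finset.sum_congr rfl fun i _ => by ring
    rw [e6, Finset.sum_add_distrib, ← Finset.mul_sum, Finset.sum_const, Nat.card_Icc,
      Nat.add_sub_cancel, nsmul_eq_mul]
    rw [hN, normSq]
    ring
  rw [hsplit2]
  have k1 : 2*L^2*C0^2*(A-B)^2 * (((M-1:ℕ):ℝ)*h) ≤ 2*L^2*C0^2*(A-B)^2 * adag :=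
    mul_le_mul_of_nonneg_left hcard (by positivity)
  have k2 : 2*L^2*C0^2*adag*(A-B)^2 ≤ 2*L^2*C0^2*adag*(256*ψmax^2*(adag*N)) :=
    mul_le_mul_of_nonneg_left hAB2 (by positivity)
  nlinarith [k1, k2]
end
end

section
/- Let T > 0, C > 0, N a positive natural number and k = T/N with k ≤ 1/4. Suppose a_0, a_1, …, a_N and b_1, …, b_N are nonnegative real numbers satisfying a_n ≤ ((1 + Ck)/(1 − 2k))·a_{n−1} + (Ck/(1 − 2k))·b_n for all 1 ≤ n ≤ N. Then for every 0 ≤ n ≤ N, a_n ≤ e^{2(C+2)T}·(a_0 + 2Ck·Σ_{m=1}^n b_m). -/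
/-!
Each step multiplies `a` by at most `r = (1 + Ck)/(1 - 2k)` and adds at most `2Ck b_n`, so by
induction `a_n ≤ r^n (a_0 + 2Ck Σ b_m)` as long as `r ≥ 1`. For `k ≤ 1/4` one has
`1/(1 - 2k) ≤ 1 + 4k`, hence `r ≤ 1 + 2(C + 2)k ≤ e^{2(C+2)k}`, and `r^n ≤ e^{2(C+2)nk} ≤ e^{2(C+2)T}`
because `nk ≤ Nk = T`.
-/

open Finset

theorem le_pow_mul_add_sum_of_le_mul_add {N : ℕ} {r c : ℝ} {a b : ℕ → ℝ} (hr : 1 ≤ r)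
    (hc : 0 ≤ c) (hb : ∀ n, 1 ≤ n → n ≤ N → 0 ≤ b n)
    (hrec : ∀ n, 1 ≤ n → n ≤ N → a n ≤ r * a (n - 1) + c * b n) :
    ∀ n ≤ N, a n ≤ r ^ n * (a 0 + c * ∑ m ∈ Icc 1 n, b m) := by
  intro n
  induction n with
  | zero => intro _; simp
  | succ n ih =>
    intro hn
    have hcb : 0 ≤ c * b (n + 1) := mul_nonneg hc (hb (n + 1) n.succ_pos hn)
    have hpow : 1 ≤ r ^ (n + 1) := one_le_pow₀ hr
    calc a (n + 1) ≤ r * a n + c * b (n + 1) := hrec (n + 1) n.succ_pos hn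
      _ ≤ r * (r ^ n * (a 0 + c * ∑ m ∈ Icc 1 n, b m)) + r ^ (n + 1) * (c * b (n + 1)) := by
        gcongr ?_ + ?_
        · exact mul_le_mul_of_nonneg_left (ih (Nat.le_of_succ_le hn)) (by linarith)
        · exact le_mul_of_one_le_left hcb hpow
      _ = r ^ (n + 1) * (a 0 + c * ∑ m ∈ Icc 1 (n + 1), b m) := by
        rw [sum_Icc_succ_top (Nat.le_add_left 1 n)]
        ring

theorem natCast_mul_div_natCast_le {n N : ℕ} {T : ℝ} (hT : 0 ≤ T) (hn : n ≤ N) :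
    n * (T / N) ≤ T := by
  rcases N.eq_zero_or_pos with rfl | hN
  · simpa using hT
  · rw [mul_div_assoc', div_le_iff₀ (by exact_mod_cast hN), mul_comm T]
    gcongr

section StepFactor

variable {C k : ℝ}

theorem one_le_one_add_mul_div_one_sub_two_mul (hC : 0 ≤ C) (hk : 0 ≤ k) (hk2 : 2 * k < 1) :
    1 ≤ (1 + C * k) / (1 - 2 * k) := by
  rw [le_div_iff₀ (by linarith)]
  nlinarith [mul_nonneg hC hk]

theorem div_one_sub_two_mul_le_two_mul {x : ℝ} (hx : 0 ≤ x) (hk4 : k ≤ 1 / 4) :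
    x / (1 - 2 * k) ≤ 2 * x := by
  rw [div_le_iff₀ (by linarith)]
  nlinarith

theorem one_add_mul_div_one_sub_two_mul_le_exp (hC : 0 ≤ C) (hk : 0 ≤ k) (hk4 : k ≤ 1 / 4) :
    (1 + C * k) / (1 - 2 * k) ≤ Real.exp (2 * (C + 2) * k) := by
  have hCk : 0 ≤ C * k := mul_nonneg hC hk
  calc (1 + C * k) / (1 - 2 * k) ≤ (1 + C * k) * (1 + 4 * k) := by
        rw [div_le_iff₀ (by linarith)]
        nlinarith [mul_nonneg (mul_nonneg (by linarith : (0 : ℝ) ≤ 1 + C * k) hk)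
          (by linarith : (0 : ℝ) ≤ 1 - 4 * k)]
    _ ≤ 2 * (C + 2) * k + 1 := by nlinarith [mul_nonneg hCk (by linarith : (0 : ℝ) ≤ 1 - 4 * k)]
    _ ≤ Real.exp (2 * (C + 2) * k) := Real.add_one_le_exp _

end StepFactor

theorem stmt_10_general (T C : ℝ) (hT : 0 < T) (hC : 0 < C) (N : ℕ)
    (k : ℝ) (hk : k = T / N) (hk4 : k ≤ 1/4)
    (a b : ℕ → ℝ) (ha : ∀ n ≤ N, 0 ≤ a n) (hb : ∀ n, 1 ≤ n → n ≤ N → 0 ≤ b n)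
    (hrec : ∀ n, 1 ≤ n → n ≤ N →
      a n ≤ ((1 + C*k)/(1 - 2*k)) * a (n-1) + (C*k/(1 - 2*k)) * b n) :
    ∀ n ≤ N, a n ≤ Real.exp (2*(C+2)*T) * (a 0 + 2*C*k * ∑ m ∈ Finset.Icc 1 n, b m) := by
  have hk0 : 0 ≤ k := hk ▸ by positivity
  have hCk : 0 ≤ C * k := mul_nonneg hC.le hk0
  set r := (1 + C*k)/(1 - 2*k)
  have hr : 1 ≤ r := one_le_one_add_mul_div_one_sub_two_mul hC.le hk0 (by linarith)
  have hgronwall := le_pow_mul_add_sum_of_le_mul_add (c := 2*C*k) hr (by positivity) hb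
    fun n h1 hn => (hrec n h1 hn).trans <| by
      gcongr
      · exact hb n h1 hn
      · simpa only [mul_assoc] using div_one_sub_two_mul_le_two_mul hCk hk4
  intro n hn
  have hpow : r ^ n ≤ Real.exp (2*(C+2)*T) := calc
    r ^ n ≤ Real.exp (2*(C+2)*k) ^ n :=
      pow_le_pow_left₀ (by linarith) (one_add_mul_div_one_sub_two_mul_le_exp hC.le hk0 hk4) n
    _ = Real.exp (2*(C+2) * (n * k)) := by rw [← Real.exp_nat_mul]; ring_nf
    _ ≤ Real.exp (2*(C+2)*T) := by
      gcongr
      exact hk ▸ natCast_mul_div_natCast_le hT.le hn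
  have hsum : 0 ≤ ∑ m ∈ Finset.Icc 1 n, b m :=
    sum_nonneg fun m hm => hb m (mem_Icc.1 hm).1 ((mem_Icc.1 hm).2.trans hn)
  calc a n ≤ r ^ n * (a 0 + 2*C*k * ∑ m ∈ Finset.Icc 1 n, b m) := hgronwall n hn
    _ ≤ Real.exp (2*(C+2)*T) * (a 0 + 2*C*k * ∑ m ∈ Finset.Icc 1 n, b m) := by
      gcongr
      have := ha 0 (Nat.zero_le N)
      positivity

/-- Discrete Gronwall lemma: if `k = T/N ≤ 1/4` and the nonnegative numbers `a_n`, `b_n`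
satisfy `a_n ≤ ((1+Ck)/(1-2k)) a_{n-1} + (Ck/(1-2k)) b_n` for `1 ≤ n ≤ N`, then
`a_n ≤ e^{2(C+2)T} (a_0 + 2Ck Σ_{m=1}^n b_m)` for every `0 ≤ n ≤ N`. -/
theorem stmt_10 (T C : ℝ) (hT : 0 < T) (hC : 0 < C) (N : ℕ) (hN : 0 < N)
    (k : ℝ) (hk : k = T / N) (hk4 : k ≤ 1/4)
    (a b : ℕ → ℝ) (ha : ∀ n ≤ N, 0 ≤ a n) (hb : ∀ n, 1 ≤ n → n ≤ N → 0 ≤ b n)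
    (hrec : ∀ n, 1 ≤ n → n ≤ N →
      a n ≤ ((1 + C*k)/(1 - 2*k)) * a (n-1) + (C*k/(1 - 2*k)) * b n) :
    ∀ n ≤ N, a n ≤ Real.exp (2*(C+2)*T) * (a 0 + 2*C*k * ∑ m ∈ Finset.Icc 1 n, b m) :=
  stmt_10_general T C hT hC N k hk hk4 a b ha hb hrec
end

section
/- Assume d and B are bounded by D and Lipschitz in their second variable with constant L, |ψ_j(x_i)| ≤ ψ_max, and the mesh coupling k = r·h² = λ·h with λ + 2r ≤ 1. Then there exist constants C > 0 and k_0 ∈ (0, 1/2), depending only on D, L, ψ_max, C_0, a_† and T (independent of h, k, n), with the following property: for all k ≤ k_0 and all V_h, W_h ∈ X_h whose components satisfy ‖V^n‖_∞ ≤ C_0 and ‖W^n‖_∞ ≤ C_0 for 0 ≤ n ≤ N, writing Φ_h(V_h) = (P_0, P^0, …, P^N, P_M) and Φ_h(W_h) = (R_0, R^0, …, R^N, R_M), one has for every 1 ≤ n ≤ N: ‖V^n − W^n‖² ≤ ((1 + Ck)/(1 − 2k))‖V^{n−1} − W^{n−1}‖² + (Ck/(1 − 2k))·(‖P^n − R^n‖²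 + |P_0^{n−1} − R_0^{n−1}|² + h|P_M^{n−1} − R_M^{n−1}|²). -/
open scoped BigOperators

noncomputable section

/-- `‖Z‖_*² = Σ_{n=0}^{N} k |Z^n|²`. -/
def starSq (k : ℝ) (N : ℕ) (Z : ℕ → ℝ) : ℝ :=
  ∑ n ∈ Finset.range (N+1), k * (Z n)^2

/-- The norm on `X_h`. -/
def XNorm (h k : ℝ) (M N : ℕ) (V0 : ℕ → ℝ) (V : ℕ → ℕ → ℝ) (VM : ℕ → ℝ) : ℝ :=
  h * (Real.sqrt (starSq k N V0) + Real.sqrt (starSq k N VM))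
    + Finset.sup' (Finset.range (N+1)) ⟨0, Finset.mem_range.mpr (Nat.succ_pos N)⟩
        (fun n => Real.sqrt (normSq h M (V n)))

/-- The square of the norm on `Y_h`. -/
def YNormSq (h k : ℝ) (M N : ℕ) (P0 : ℕ → ℝ) (P : ℕ → ℕ → ℝ) (PM : ℕ → ℝ) : ℝ :=
  starSq k N P0 + normSq h M (P 0) + h * starSq k N PM
    + ∑ n ∈ Finset.Icc 1 N, k * normSq h M (P n)

/-- Extension of an interior vector by the boundary entries. -/
def extV (M : ℕ) (V0 : ℕ → ℝ) (V : ℕ → ℕ → ℝ) (VM : ℕ → ℝ) (n i : ℕ) : ℝ :=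
  if i = 0 then V0 n else if i = M then VM n else V n i

/-- Boundary component `P_0^n` of `Φ_h`. -/
def phiP0 (h : ℝ) (M' : ℕ) (B : ℝ → ℝ → ℝ) (ψ2 : ℝ → ℝ)
    (V0 : ℕ → ℝ) (V : ℕ → ℕ → ℝ) (n : ℕ) : ℝ :=
  (1 + 1/h) * V0 n - (1/h) * V n 1
    - Qh h M' (fun i => B ((i:ℝ)*h) (Qh h M' (fun j => ψ2 ((j:ℝ)*h) * V n j)) * V n i)

/-- Boundary component `P_M^n` of `Φ_h`. -/
def phiPM (h : ℝ) (VM : ℕ → ℝ) (n : ℕ) : ℝ := VM n / h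

/-- Interior component `P_i^n` (for `1 ≤ n ≤ N`) of `Φ_h`. -/
def phiPi (h k : ℝ) (M' : ℕ) (d : ℝ → ℝ → ℝ) (ψ1 : ℝ → ℝ)
    (V0 : ℕ → ℝ) (V : ℕ → ℕ → ℝ) (VM : ℕ → ℝ) (n i : ℕ) : ℝ :=
  (V n i - V (n-1) i)/k
    + (extV (2*(M'+3)) V0 V VM (n-1) i - extV (2*(M'+3)) V0 V VM (n-1) (i-1))/h
    + d ((i:ℝ)*h) (Qh h M' (fun j => ψ1 ((j:ℝ)*h) * V (n-1) j)) * V (n-1) i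
    - (extV (2*(M'+3)) V0 V VM (n-1) (i+1) + extV (2*(M'+3)) V0 V VM (n-1) (i-1)
        - 2 * V (n-1) i)/h^2

/-- Interior component `P_i^n` of `Φ_h`, for all `0 ≤ n ≤ N`. -/
def phiP (h k : ℝ) (M' : ℕ) (d : ℝ → ℝ → ℝ) (ψ1 u0 : ℝ → ℝ)
    (V0 : ℕ → ℝ) (V : ℕ → ℕ → ℝ) (VM : ℕ → ℝ) (n i : ℕ) : ℝ :=
  if n = 0 then V 0 i - u0 ((i:ℝ)*h) else phiPi h k M' d ψ1 V0 V VM n i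


/-! Subtracting the schemes for `V` and `W`, each interior row of `Vⁿ - Wⁿ` is the combination
with weights `1 - λ - 2r, λ + r, r` (convex since `λ + 2r ≤ 1`) of the previous error at
`i, i - 1, i + 1`, plus `k` times the difference of residuals minus that of the nonlocal
reaction terms. Squaring (Jensen, then Young with weight `k`) and summing bounds the new error by
`(1 + k)` times the shifted previous errors; shifting costs only the two boundary values, which
the boundary components of `Φ_h` express through `P₀` and `P_M`. The nonlocal terms are
Lipschitz in `‖Vⁿ⁻¹ - Wⁿ⁻¹‖`, because `|Q_h(U)| ≤ 16 h Σ |Uᵢ|`, which by Cauchy–Schwarz is at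
most a constant times `√a_† ‖U‖`. -/

theorem Finset.sum_Icc_one_comp_pred {G : Type*} [AddCommGroup G] (f : ℕ → G) (m : ℕ) :
    ∑ i ∈ Finset.Icc 1 m, f (i - 1) = f 0 + ∑ i ∈ Finset.Icc 1 m, f i - f m := by
  induction m with
  | zero => simp
  | succ m ih =>
    rw [Finset.sum_Icc_succ_top (by omega), Finset.sum_Icc_succ_top (by omega), ih,
      Nat.add_sub_cancel]
    abel

theorem Finset.sum_Icc_one_comp_succ {G : Type*} [AddCommGroup G] (f : ℕ → G) (m : ℕ) :
    ∑ i ∈ Finset.Icc 1 m, f (i + 1) = f (m + 1) + ∑ i ∈ Finset.Icc 1 m, f i - f 1 := by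
  induction m with
  | zero => simp
  | succ m ih =>
    rw [Finset.sum_Icc_succ_top (by omega), Finset.sum_Icc_succ_top (by omega), ih]
    abel

theorem Finset.sum_comp_le_sum_of_injOn {ι κ N : Type*} [AddCommMonoid N] [Preorder N]
    [AddLeftMono N] {s : Finset ι} {t : Finset κ} {f : κ → N} {g : ι → κ}
    (hf : ∀ j ∈ t, 0 ≤ f j) (hg : Set.InjOn g s) (hgst : Set.MapsTo g s t) :
    ∑ i ∈ s, f (g i) ≤ ∑ j ∈ t, f j := by
  classical
  rw [← Finset.sum_image hg]
  exact Finset.sum_le_sum_of_subset_of_nonneg (Finset.image_subset_iff.mpr hgst)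
    fun j hj _ => hf j hj

theorem sq_add_mul_le {s g k : ℝ} (hk : 0 ≤ k) :
    (s + k * g) ^ 2 ≤ (1 + k) * s ^ 2 + k * (1 + k) * g ^ 2 := by
  nlinarith [mul_nonneg hk (sq_nonneg (s - g))]

theorem sq_convex_comb_le {a b c x y z : ℝ} (ha : 0 ≤ a) (hb : 0 ≤ b) (hc : 0 ≤ c)
    (habc : a + b + c = 1) :
    (a * x + b * y + c * z) ^ 2 ≤ a * x ^ 2 + b * y ^ 2 + c * z ^ 2 := by
  nlinarith [mul_nonneg (mul_nonneg ha hb) (sq_nonneg (x - y)),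
    mul_nonneg (mul_nonneg ha hc) (sq_nonneg (x - z)),
    mul_nonneg (mul_nonneg hb hc) (sq_nonneg (y - z))]

theorem one_add_mul_sq_le_of_eq {h x y z : ℝ} (hh : 0 ≤ h) (hxyz : (1 + h) * x = y + h * z) :
    (1 + h) * x ^ 2 ≤ y ^ 2 + h * z ^ 2 := by
  have hpos : 0 < 1 + h := by linarith
  refine le_of_mul_le_mul_left ?_ hpos
  have hsq : ((1 + h) * x) ^ 2 ≤ (1 + h) * (y ^ 2 + h * z ^ 2) := by
    rw [hxyz]; nlinarith [mul_nonneg hh (sq_nonneg (y - z))]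
  nlinarith

theorem sq_mul_sub_mul_le {a b v w D ℓ C₀ : ℝ} (ha : |a| ≤ D) (hab : |a - b| ≤ ℓ)
    (hw : |w| ≤ C₀) :
    (a * v - b * w) ^ 2 ≤ 2 * D ^ 2 * (v - w) ^ 2 + 2 * ℓ ^ 2 * C₀ ^ 2 := by
  have hsplit : a * v - b * w = a * (v - w) + (a - b) * w := by ring
  have h1 : (a * (v - w)) ^ 2 ≤ D ^ 2 * (v - w) ^ 2 := by
    rw [mul_pow]
    exact mul_le_mul_of_nonneg_right (sq_le_sq' (abs_le.mp ha).1 (abs_le.mp ha).2) (sq_nonneg _)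
  have h2 : ((a - b) * w) ^ 2 ≤ ℓ ^ 2 * C₀ ^ 2 := by
    rw [mul_pow]
    exact mul_le_mul (sq_le_sq' (abs_le.mp hab).1 (abs_le.mp hab).2)
      (sq_le_sq' (abs_le.mp hw).1 (abs_le.mp hw).2) (sq_nonneg _) (sq_nonneg _)
  rw [hsplit]
  nlinarith [add_sq_le (a := a * (v - w)) (b := (a - b) * w)]

section NormSq

variable {h : ℝ} {M : ℕ}

theorem normSq_nonneg (hh : 0 ≤ h) (u : ℕ → ℝ) : 0 ≤ normSq h M u :=
  Finset.sum_nonneg fun _ _ => by positivity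

theorem normSq_congr {u v : ℕ → ℝ} (huv : ∀ i ∈ Finset.Icc 1 (M - 1), u i = v i) :
    normSq h M u = normSq h M v :=
  Finset.sum_congr rfl fun i hi => by rw [huv i hi]

theorem normSq_comp_pred (u : ℕ → ℝ) :
    normSq h M (fun i => u (i - 1)) = h * u 0 ^ 2 + normSq h M u - h * u (M - 1) ^ 2 :=
  Finset.sum_Icc_one_comp_pred (fun i => h * u i ^ 2) (M - 1)

theorem normSq_comp_succ (hM : 1 ≤ M) (u : ℕ → ℝ) :
    normSq h M (fun i => u (i + 1)) = h * u M ^ 2 + normSq h M u - h * u 1 ^ 2 := by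
  have := Finset.sum_Icc_one_comp_succ (fun i => h * u i ^ 2) (M - 1)
  rwa [Nat.sub_add_cancel hM] at this

theorem normSq_le_of_sq_le (hh : 0 ≤ h) {u v : ℕ → ℝ} {α β : ℝ} (hβ : 0 ≤ β)
    (huv : ∀ i ∈ Finset.Icc 1 (M - 1), u i ^ 2 ≤ α * v i ^ 2 + β) :
    normSq h M u ≤ α * normSq h M v + M * h * β := by
  have hcard : ((M - 1 : ℕ) : ℝ) ≤ M := by exact_mod_cast Nat.sub_le M 1
  calc normSq h M u ≤ ∑ i ∈ Finset.Icc 1 (M - 1), (α * (h * v i ^ 2) + h * β) :=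
        Finset.sum_le_sum fun i hi => by nlinarith [huv i hi]
    _ = α * normSq h M v + (M - 1 : ℕ) * h * β := by
        rw [Finset.sum_add_distrib, ← Finset.mul_sum, Finset.sum_const, Nat.card_Icc,
          nsmul_eq_mul, normSq, Nat.add_sub_cancel, mul_assoc]
    _ ≤ α * normSq h M v + M * h * β := by gcongr

theorem normSq_sub_le (hh : 0 ≤ h) (u v : ℕ → ℝ) :
    normSq h M (fun i => u i - v i) ≤ 2 * normSq h M u + 2 * normSq h M v := by
  simp only [normSq, Finset.mul_sum, ← Finset.sum_add_distrib]
  exact Finset.sum_le_sum fun i _ => by nlinarith [mul_nonneg hh (sq_nonneg (u i + v i))]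

theorem normSq_mul_sub_mul_le {D ℓ C₀ : ℝ} (hh : 0 ≤ h) {a b V W : ℕ → ℝ}
    (ha : ∀ i ∈ Finset.Icc 1 (M - 1), |a i| ≤ D)
    (hab : ∀ i ∈ Finset.Icc 1 (M - 1), |a i - b i| ≤ ℓ)
    (hW : ∀ i ∈ Finset.Icc 1 (M - 1), |W i| ≤ C₀) :
    normSq h M (fun i => a i * V i - b i * W i)
      ≤ 2 * D ^ 2 * normSq h M (fun i => V i - W i) + M * h * (2 * ℓ ^ 2 * C₀ ^ 2) :=
  normSq_le_of_sq_le hh (by positivity) fun i hi =>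
    sq_mul_sub_mul_le (ha i hi) (hab i hi) (hW i hi)

end NormSq

section Quadrature

variable {h : ℝ} {M' : ℕ}

theorem Qh_sub (f g : ℕ → ℝ) : Qh h M' f - Qh h M' g = Qh h M' (fun i => f i - g i) := by
  have hmid : ∑ i ∈ Finset.Icc 2 M', (f (2 * i) - g (2 * i) + 4 * (f (2 * i + 1) - g (2 * i + 1))
        + (f (2 * i + 2) - g (2 * i + 2)))
      = ∑ i ∈ Finset.Icc 2 M', (f (2 * i) + 4 * f (2 * i + 1) + f (2 * i + 2))
        - ∑ i ∈ Finset.Icc 2 M', (g (2 * i) + 4 * g (2 * i + 1) + g (2 * i + 2)) := by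
    rw [← Finset.sum_sub_distrib]
    exact Finset.sum_congr rfl fun _ _ => by ring
  simp only [Qh, hmid]
  ring

theorem abs_Qh_le (hh : 0 ≤ h) (U : ℕ → ℝ) :
    |Qh h M' U| ≤ 16 * h * ∑ j ∈ Finset.Icc 1 (2 * M' + 5), |U j| := by
  set T := ∑ j ∈ Finset.Icc 1 (2 * M' + 5), |U j|
  have hU : ∀ j, 1 ≤ j → j ≤ 2 * M' + 5 → |U j| ≤ T := fun j h1 h2 =>
    Finset.single_le_sum (f := fun j => |U j|) (fun _ _ => abs_nonneg _)
      (Finset.mem_Icc.mpr ⟨h1, h2⟩)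
  have hsub : ∀ c ≤ 2, ∑ i ∈ Finset.Icc 2 M', |U (2 * i + c)| ≤ T := fun c hc =>
    Finset.sum_comp_le_sum_of_injOn (f := fun j => |U j|) (g := fun i => 2 * i + c)
      (fun _ _ => abs_nonneg _)
      (fun _ _ _ _ e => by simp only at e; omega)
      (fun i hi => by simp only [Finset.coe_Icc, Set.mem_Icc] at hi ⊢; omega)
  have hmid : |∑ i ∈ Finset.Icc 2 M', (U (2 * i) + 4 * U (2 * i + 1) + U (2 * i + 2))|
      ≤ 6 * T := by
    calc _ ≤ ∑ i ∈ Finset.Icc 2 M', (|U (2 * i + 0)| + 4 * |U (2 * i + 1)| + |U (2 * i + 2)|) :=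
          (Finset.abs_sum_le_sum_abs _ _).trans <| Finset.sum_le_sum fun i _ => by
            rw [add_zero, abs_le]
            constructor <;> linarith [neg_abs_le (U (2 * i)), neg_abs_le (U (2 * i + 1)),
              neg_abs_le (U (2 * i + 2)), le_abs_self (U (2 * i)),
              le_abs_self (U (2 * i + 1)), le_abs_self (U (2 * i + 2))]
      _ ≤ 6 * T := by
          rw [Finset.sum_add_distrib, Finset.sum_add_distrib, ← Finset.mul_sum]
          linarith [hsub 0 (by norm_num), hsub 1 (by norm_num), hsub 2 le_rfl]
  have hleft : |2 * U 1 - U 2 + 2 * U 3| ≤ 5 * T := by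
    have h1 := abs_le.mp (hU 1 le_rfl (by omega))
    have h2 := abs_le.mp (hU 2 (by omega) (by omega))
    have h3 := abs_le.mp (hU 3 (by omega) (by omega))
    exact abs_le.mpr ⟨by linarith [h1.1, h2.2, h3.1], by linarith [h1.2, h2.1, h3.2]⟩
  have hright : |2 * U (2 * M' + 3) - U (2 * M' + 4) + 2 * U (2 * M' + 5)| ≤ 5 * T := by
    have h1 := abs_le.mp (hU (2 * M' + 3) (by omega) (by omega))
    have h2 := abs_le.mp (hU (2 * M' + 4) (by omega) (by omega))
    have h3 := abs_le.mp (hU (2 * M' + 5) (by omega) le_rfl)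
    exact abs_le.mpr ⟨by linarith [h1.1, h2.2, h3.1], by linarith [h1.2, h2.1, h3.2]⟩
  rw [abs_le] at hleft hmid hright
  rw [Qh, abs_le]
  constructor <;> nlinarith [mul_le_mul_of_nonneg_left hleft.1 hh,
    mul_le_mul_of_nonneg_left hleft.2 hh, mul_le_mul_of_nonneg_left hmid.1 hh,
    mul_le_mul_of_nonneg_left hmid.2 hh, mul_le_mul_of_nonneg_left hright.1 hh,
    mul_le_mul_of_nonneg_left hright.2 hh]

theorem sq_Qh_le (hh : 0 ≤ h) (U : ℕ → ℝ) :
    Qh h M' U ^ 2 ≤ 256 * ((2 * (M' + 3) : ℕ) * h) * normSq h (2 * (M' + 3)) U := by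
  set S := ∑ j ∈ Finset.Icc 1 (2 * M' + 5), U j ^ 2
  have hS : 0 ≤ S := Finset.sum_nonneg fun _ _ => sq_nonneg _
  have hnorm : normSq h (2 * (M' + 3)) U = h * S := by
    rw [normSq, show 2 * (M' + 3) - 1 = 2 * M' + 5 by omega, Finset.mul_sum]
  have hCS : (∑ j ∈ Finset.Icc 1 (2 * M' + 5), |U j|) ^ 2 ≤ (2 * M' + 5 : ℕ) * S := by
    simpa [sq_abs, S] using sq_sum_le_card_mul_sum_sq (s := Finset.Icc 1 (2 * M' + 5))
      (f := fun j => |U j|)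
  have hcast : ((2 * M' + 5 : ℕ) : ℝ) ≤ (2 * (M' + 3) : ℕ) := by exact_mod_cast (by omega)
  calc Qh h M' U ^ 2 ≤ (16 * h * ∑ j ∈ Finset.Icc 1 (2 * M' + 5), |U j|) ^ 2 :=
        sq_le_sq' (abs_le.mp (abs_Qh_le hh U)).1 (abs_le.mp (abs_Qh_le hh U)).2
    _ ≤ 256 * h ^ 2 * ((2 * M' + 5 : ℕ) * S) := by
        rw [mul_pow]; nlinarith [mul_le_mul_of_nonneg_left hCS (sq_nonneg h)]
    _ ≤ 256 * ((2 * (M' + 3) : ℕ) * h) * normSq h (2 * (M' + 3)) U := by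
        rw [hnorm]; nlinarith [mul_le_mul_of_nonneg_right hcast (mul_nonneg (sq_nonneg h) hS)]

theorem sq_Qh_mul_sub_le (hh : 0 ≤ h) {p V W : ℕ → ℝ} {P : ℝ}
    (hp : ∀ i ∈ Finset.Icc 1 (2 * (M' + 3) - 1), |p i| ≤ P) :
    (Qh h M' (fun j => p j * V j) - Qh h M' (fun j => p j * W j)) ^ 2
      ≤ 256 * ((2 * (M' + 3) : ℕ) * h) * (P ^ 2 * normSq h (2 * (M' + 3)) (fun j => V j - W j)) := by
  rw [Qh_sub]
  refine (sq_Qh_le hh _).trans (mul_le_mul_of_nonneg_left ?_ (by positivity))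
  simpa using normSq_le_of_sq_le hh le_rfl (β := 0) (α := P ^ 2) fun i hi => by
    rw [← mul_sub, mul_pow, add_zero]
    exact mul_le_mul_of_nonneg_right
      (sq_le_sq' (abs_le.mp (hp i hi)).1 (abs_le.mp (hp i hi)).2) (sq_nonneg _)

end Quadrature

theorem normSq_le_of_upwind_step {h k r lam Y Z : ℝ} {M : ℕ} (hM : 1 ≤ M) (hh : 0 < h)
    (hk : 0 ≤ k) (hk1 : k ≤ 1) (hr : 0 ≤ r) (hlam : 0 ≤ lam) (hlam_h : lam * h = k)
    (hr_h : r * h ^ 2 = k) (hrl : lam + 2 * r ≤ 1) {u e g : ℕ → ℝ}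
    (hu : ∀ i ∈ Finset.Icc 1 (M - 1),
      u i = (1 - lam - 2 * r) * e i + (lam + r) * e (i - 1) + r * e (i + 1) + k * g i)
    (he0 : (1 + h) * e 0 = e 1 + h * Y) (heM : e M = h * Z) :
    normSq h M u ≤ (1 + k) * normSq h M e + 2 * k * (Y ^ 2 + h * Z ^ 2 + normSq h M g) := by
  have hrow : ∀ i ∈ Finset.Icc 1 (M - 1), h * u i ^ 2
      ≤ (1 + k) * ((1 - lam - 2 * r) * (h * e i ^ 2) + (lam + r) * (h * e (i - 1) ^ 2)
          + r * (h * e (i + 1) ^ 2)) + k * (1 + k) * (h * g i ^ 2) := by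
    intro i hi
    have hconv := sq_convex_comb_le (x := e i) (y := e (i - 1)) (z := e (i + 1))
      (by linarith : 0 ≤ 1 - lam - 2 * r) (by linarith : 0 ≤ lam + r) hr (by ring)
    have hyoung := sq_add_mul_le (s := (1 - lam - 2 * r) * e i + (lam + r) * e (i - 1)
      + r * e (i + 1)) (g := g i) hk
    rw [hu i hi]
    nlinarith [mul_le_mul_of_nonneg_left hconv (by linarith : 0 ≤ 1 + k)]
  have hsum : normSq h M u ≤ (1 + k) * ((1 - lam - 2 * r) * normSq h M e
      + (lam + r) * normSq h M (fun i => e (i - 1)) + r * normSq h M (fun i => e (i + 1)))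
      + k * (1 + k) * normSq h M g := by
    refine (Finset.sum_le_sum hrow).trans_eq ?_
    simp only [normSq, Finset.mul_sum, ← Finset.sum_add_distrib]
  rw [normSq_comp_pred, normSq_comp_succ hM] at hsum
  have hlam_r : lam = r * h := by
    apply mul_right_cancel₀ hh.ne'; linear_combination hlam_h - hr_h
  -- the shift `e (i - 1)` brings in `e 0`, a convex combination of `e 1` and `Y` by `he0`
  have hleft : h * ((lam + r) * e 0 ^ 2) ≤ r * (h * e 1 ^ 2) + k * Y ^ 2 := by
    have := mul_le_mul_of_nonneg_left (one_add_mul_sq_le_of_eq hh.le he0)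
      (mul_nonneg hr hh.le)
    rw [hlam_r, ← hr_h]; nlinarith
  have hright : r * (h * e M ^ 2) = k * (h * Z ^ 2) := by rw [heM, ← hr_h]; ring
  have hsplit : (1 - lam - 2 * r) * normSq h M e
      + (lam + r) * (h * e 0 ^ 2 + normSq h M e - h * e (M - 1) ^ 2)
      + r * (h * e M ^ 2 + normSq h M e - h * e 1 ^ 2)
      ≤ normSq h M e + k * (Y ^ 2 + h * Z ^ 2) := by
    nlinarith [mul_nonneg (add_nonneg hlam hr) (mul_nonneg hh.le (sq_nonneg (e (M - 1))))]
  have hg := normSq_nonneg hh.le (M := M) g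
  have hY : 0 ≤ Y ^ 2 + h * Z ^ 2 := by positivity
  nlinarith [mul_le_mul_of_nonneg_left hsplit (by linarith : 0 ≤ 1 + k),
    mul_le_mul_of_nonneg_left hk1 (mul_nonneg hk (add_nonneg hY hg))]

section Scheme

variable {h k : ℝ} {M' : ℕ}

theorem extV_of_mem {M n i : ℕ} (V0 VM : ℕ → ℝ) (V : ℕ → ℕ → ℝ)
    (hi : i ∈ Finset.Icc 1 (M - 1)) : extV M V0 V VM n i = V n i := by
  rw [Finset.mem_Icc] at hi
  rw [extV, if_neg (by omega), if_neg (by omega)]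

theorem phiPi_solve {r lam : ℝ} (hh : h ≠ 0) (hk : k ≠ 0) (hlam_h : lam * h = k)
    (hr_h : r * h ^ 2 = k) (d : ℝ → ℝ → ℝ) (ψ1 : ℝ → ℝ) (V0 VM : ℕ → ℝ) (V : ℕ → ℕ → ℝ) (n : ℕ)
    {i : ℕ} (hi : i ∈ Finset.Icc 1 (2 * (M' + 3) - 1)) :
    V n i = (1 - lam - 2 * r) * extV (2 * (M' + 3)) V0 V VM (n - 1) i
      + (lam + r) * extV (2 * (M' + 3)) V0 V VM (n - 1) (i - 1)
      + r * extV (2 * (M' + 3)) V0 V VM (n - 1) (i + 1)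
      + k * (phiPi h k M' d ψ1 V0 V VM n i
        - d (i * h) (Qh h M' (fun j => ψ1 (j * h) * V (n - 1) j)) * V (n - 1) i) := by
  have hext := extV_of_mem (n := n - 1) V0 VM V hi
  obtain rfl : lam = k / h := by field_simp; linarith
  obtain rfl : r = k / h ^ 2 := by field_simp; linarith
  rw [phiPi, hext]
  field_simp
  ring

theorem phiP0_solve (hh : h ≠ 0) (B : ℝ → ℝ → ℝ) (ψ2 : ℝ → ℝ) (V0 : ℕ → ℝ) (V : ℕ → ℕ → ℝ)
    (n : ℕ) :
    (1 + h) * V0 n = V n 1 + h * (phiP0 h M' B ψ2 V0 V n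
      + Qh h M' (fun i => B (i * h) (Qh h M' (fun j => ψ2 (j * h) * V n j)) * V n i)) := by
  rw [phiP0]
  field_simp
  ring

theorem normSq_sub_le_phi_residual {r lam : ℝ} (hh : 0 < h) (hk : 0 < k) (hk1 : k ≤ 1)
    (hr : 0 ≤ r) (hlam : 0 ≤ lam) (hlam_h : lam * h = k) (hr_h : r * h ^ 2 = k)
    (hrl : lam + 2 * r ≤ 1) (d B : ℝ → ℝ → ℝ) (ψ1 ψ2 : ℝ → ℝ) (V0 VM W0 WM : ℕ → ℝ)
    (V W : ℕ → ℕ → ℝ) (n : ℕ) :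
    normSq h (2 * (M' + 3)) (fun i => V n i - W n i)
      ≤ (1 + k) * normSq h (2 * (M' + 3)) (fun i => V (n - 1) i - W (n - 1) i)
        + 2 * k * (((phiP0 h M' B ψ2 V0 V (n - 1) - phiP0 h M' B ψ2 W0 W (n - 1))
            + (Qh h M' (fun i => B (i * h) (Qh h M' (fun j => ψ2 (j * h) * V (n - 1) j))
                * V (n - 1) i)
              - Qh h M' (fun i => B (i * h) (Qh h M' (fun j => ψ2 (j * h) * W (n - 1) j))
                * W (n - 1) i))) ^ 2
          + h * (phiPM h VM (n - 1) - phiPM h WM (n - 1)) ^ 2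
          + normSq h (2 * (M' + 3)) (fun i =>
              (phiPi h k M' d ψ1 V0 V VM n i - phiPi h k M' d ψ1 W0 W WM n i)
                - (d (i * h) (Qh h M' (fun j => ψ1 (j * h) * V (n - 1) j)) * V (n - 1) i
                  - d (i * h) (Qh h M' (fun j => ψ1 (j * h) * W (n - 1) j)) * W (n - 1) i))) := by
  set e : ℕ → ℝ := fun i =>
    extV (2 * (M' + 3)) V0 V VM (n - 1) i - extV (2 * (M' + 3)) W0 W WM (n - 1) i
  have hE : normSq h (2 * (M' + 3)) e
      = normSq h (2 * (M' + 3)) (fun i => V (n - 1) i - W (n - 1) i) :=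
    normSq_congr fun i hi => by simp only [e, extV_of_mem _ _ _ hi]
  rw [← hE]
  refine normSq_le_of_upwind_step (by omega) hh hk.le hk1 hr hlam hlam_h hr_h hrl
    (fun i hi => ?_) ?_ ?_
  · linear_combination phiPi_solve hh.ne' hk.ne' hlam_h hr_h d ψ1 V0 VM V n hi
      - phiPi_solve hh.ne' hk.ne' hlam_h hr_h d ψ1 W0 WM W n hi
  · simp only [e, extV, if_pos, one_ne_zero, if_false, show 1 ≠ 2 * (M' + 3) by omega]
    linear_combination phiP0_solve hh.ne' B ψ2 V0 V (n - 1)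
      - phiP0_solve hh.ne' B ψ2 W0 W (n - 1)
  · simp only [e, extV, phiPM, if_pos, show 2 * (M' + 3) ≠ 0 by omega, if_false]
    field_simp

end Scheme

def nonlocalConst (a D L ψmax C₀ : ℝ) : ℝ := 2 * D ^ 2 + 512 * (a * L * ψmax * C₀) ^ 2

def stabilityConst (a D L ψmax C₀ : ℝ) : ℝ := 4 + (4 + 1024 * a) * nonlocalConst a D L ψmax C₀

section Nonlocal

variable {a D L ψmax C₀ h : ℝ} {M' : ℕ}

theorem normSq_nonlocal_sub_le (hh : 0 ≤ h) (ha : ((2 * (M' + 3) : ℕ) : ℝ) * h = a)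
    {c : ℝ → ℝ → ℝ} {ψ : ℝ → ℝ}
    (hc : ∀ i ∈ Finset.Icc 1 (2 * (M' + 3) - 1), ∀ s, |c (i * h) s| ≤ D)
    (hcLip : ∀ i ∈ Finset.Icc 1 (2 * (M' + 3) - 1), ∀ s s',
      |c (i * h) s - c (i * h) s'| ≤ L * |s - s'|)
    (hψ : ∀ i ∈ Finset.Icc 1 (2 * (M' + 3) - 1), |ψ (i * h)| ≤ ψmax)
    {V W : ℕ → ℝ} (hW : ∀ i ∈ Finset.Icc 1 (2 * (M' + 3) - 1), |W i| ≤ C₀) :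
    normSq h (2 * (M' + 3)) (fun i => c (i * h) (Qh h M' (fun j => ψ (j * h) * V j)) * V i
        - c (i * h) (Qh h M' (fun j => ψ (j * h) * W j)) * W i)
      ≤ nonlocalConst a D L ψmax C₀ * normSq h (2 * (M' + 3)) (fun i => V i - W i) := by
  set sV := Qh h M' (fun j => ψ (j * h) * V j)
  set sW := Qh h M' (fun j => ψ (j * h) * W j)
  have hs : (sV - sW) ^ 2
      ≤ 256 * a * (ψmax ^ 2 * normSq h (2 * (M' + 3)) (fun j => V j - W j)) := by
    rw [← ha]; exact sq_Qh_mul_sub_le hh hψ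
  have hmain := normSq_mul_sub_mul_le (a := fun i => c (i * h) sV) (b := fun i => c (i * h) sW)
    hh (fun i hi => hc i hi sV) (fun i hi => hcLip i hi sV sW) hW (V := V)
  rw [ha, mul_pow, sq_abs] at hmain
  have ha0 : 0 ≤ a := ha ▸ by positivity
  rw [nonlocalConst]
  nlinarith [mul_le_mul_of_nonneg_left hs (by positivity : 0 ≤ a * (2 * L ^ 2 * C₀ ^ 2))]

theorem sq_Qh_nonlocal_sub_le (hh : 0 ≤ h) (ha : ((2 * (M' + 3) : ℕ) : ℝ) * h = a)
    {c : ℝ → ℝ → ℝ} {ψ : ℝ → ℝ}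
    (hc : ∀ i ∈ Finset.Icc 1 (2 * (M' + 3) - 1), ∀ s, |c (i * h) s| ≤ D)
    (hcLip : ∀ i ∈ Finset.Icc 1 (2 * (M' + 3) - 1), ∀ s s',
      |c (i * h) s - c (i * h) s'| ≤ L * |s - s'|)
    (hψ : ∀ i ∈ Finset.Icc 1 (2 * (M' + 3) - 1), |ψ (i * h)| ≤ ψmax)
    {V W : ℕ → ℝ} (hW : ∀ i ∈ Finset.Icc 1 (2 * (M' + 3) - 1), |W i| ≤ C₀) :
    (Qh h M' (fun i => c (i * h) (Qh h M' (fun j => ψ (j * h) * V j)) * V i)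
        - Qh h M' (fun i => c (i * h) (Qh h M' (fun j => ψ (j * h) * W j)) * W i)) ^ 2
      ≤ 256 * a * nonlocalConst a D L ψmax C₀ * normSq h (2 * (M' + 3)) (fun i => V i - W i) := by
  have hQ := sq_Qh_le hh (M' := M') (fun i => c (i * h) (Qh h M' (fun j => ψ (j * h) * V j)) * V i
    - c (i * h) (Qh h M' (fun j => ψ (j * h) * W j)) * W i)
  rw [ha] at hQ
  have ha0 : 0 ≤ a := ha ▸ by positivity
  rw [Qh_sub, mul_assoc]
  exact hQ.trans (mul_le_mul_of_nonneg_left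
    (normSq_nonlocal_sub_le hh ha hc hcLip hψ hW) (by positivity))

theorem normSq_sub_le_of_phi {k r lam : ℝ} (hh : 0 < h) (ha : ((2 * (M' + 3) : ℕ) : ℝ) * h = a)
    (hk : 0 < k) (hk1 : k ≤ 1) (hr : 0 ≤ r) (hlam : 0 ≤ lam) (hlam_h : lam * h = k)
    (hr_h : r * h ^ 2 = k) (hrl : lam + 2 * r ≤ 1) {d B : ℝ → ℝ → ℝ} {ψ1 ψ2 : ℝ → ℝ}
    (hd : ∀ i ∈ Finset.Icc 1 (2 * (M' + 3) - 1), ∀ s, |d (i * h) s| ≤ D)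
    (hB : ∀ i ∈ Finset.Icc 1 (2 * (M' + 3) - 1), ∀ s, |B (i * h) s| ≤ D)
    (hdLip : ∀ i ∈ Finset.Icc 1 (2 * (M' + 3) - 1), ∀ s s',
      |d (i * h) s - d (i * h) s'| ≤ L * |s - s'|)
    (hBLip : ∀ i ∈ Finset.Icc 1 (2 * (M' + 3) - 1), ∀ s s',
      |B (i * h) s - B (i * h) s'| ≤ L * |s - s'|)
    (hψ1 : ∀ i ∈ Finset.Icc 1 (2 * (M' + 3) - 1), |ψ1 (i * h)| ≤ ψmax)
    (hψ2 : ∀ i ∈ Finset.Icc 1 (2 * (M' + 3) - 1), |ψ2 (i * h)| ≤ ψmax)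
    {V0 VM W0 WM : ℕ → ℝ} {V W : ℕ → ℕ → ℝ} {n : ℕ}
    (hW : ∀ i ∈ Finset.Icc 1 (2 * (M' + 3) - 1), |W (n - 1) i| ≤ C₀) :
    normSq h (2 * (M' + 3)) (fun i => V n i - W n i)
      ≤ (1 + stabilityConst a D L ψmax C₀ * k)
          * normSq h (2 * (M' + 3)) (fun i => V (n - 1) i - W (n - 1) i)
        + stabilityConst a D L ψmax C₀ * k
          * (normSq h (2 * (M' + 3)) (fun i =>
                phiPi h k M' d ψ1 V0 V VM n i - phiPi h k M' d ψ1 W0 W WM n i)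
            + (phiP0 h M' B ψ2 V0 V (n - 1) - phiP0 h M' B ψ2 W0 W (n - 1)) ^ 2
            + h * (phiPM h VM (n - 1) - phiPM h WM (n - 1)) ^ 2) := by
  have henergy := normSq_sub_le_phi_residual (M' := M') hh hk hk1 hr hlam hlam_h hr_h hrl d B ψ1 ψ2
    V0 VM W0 WM V W n
  have hG := (normSq_sub_le hh.le
    (fun i => phiPi h k M' d ψ1 V0 V VM n i - phiPi h k M' d ψ1 W0 W WM n i) _).trans
    (add_le_add_right (mul_le_mul_of_nonneg_left
      (normSq_nonlocal_sub_le hh.le ha hd hdLip hψ1 hW (V := V (n - 1))) zero_le_two) _)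
  have hY := (add_sq_le (a := phiP0 h M' B ψ2 V0 V (n - 1) - phiP0 h M' B ψ2 W0 W (n - 1))).trans
    (mul_le_mul_of_nonneg_left (add_le_add_right
      (sq_Qh_nonlocal_sub_le hh.le ha hB hBLip hψ2 hW (V := V (n - 1))) _) zero_le_two)
  set NS := normSq h (2 * (M' + 3)) (fun i => V (n - 1) i - W (n - 1) i)
  set SP := normSq h (2 * (M' + 3)) (fun i =>
    phiPi h k M' d ψ1 V0 V VM n i - phiPi h k M' d ψ1 W0 W WM n i)
  set P₀ := phiP0 h M' B ψ2 V0 V (n - 1) - phiP0 h M' B ψ2 W0 W (n - 1)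
  set PM := phiPM h VM (n - 1) - phiPM h WM (n - 1)
  have hNS : 0 ≤ NS := normSq_nonneg hh.le _
  have hrest : 0 ≤ SP + P₀ ^ 2 + h * PM ^ 2 := by
    have := normSq_nonneg hh.le (M := 2 * (M' + 3)) (fun i =>
      phiPi h k M' d ψ1 V0 V VM n i - phiPi h k M' d ψ1 W0 W WM n i)
    positivity
  have ha0 : 0 ≤ a := ha ▸ by positivity
  have hC : 0 ≤ (4 + 1024 * a) * nonlocalConst a D L ψmax C₀ := by
    rw [nonlocalConst]; positivity
  rw [stabilityConst]
  linarith [mul_le_mul_of_nonneg_left hG hk.le, mul_le_mul_of_nonneg_left hY hk.le,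
    mul_nonneg (mul_nonneg hk.le hC) hrest, mul_nonneg hk.le hNS,
    mul_nonneg hk.le (mul_nonneg hh.le (sq_nonneg PM))]

end Nonlocal

theorem stmt_11_general (adag T D L ψmax C0 : ℝ) (hadag : 0 < adag)
    (d B : ℝ → ℝ → ℝ) (ψ1 ψ2 : ℝ → ℝ)
    (hdb : ∀ x ∈ Set.Icc 0 adag, ∀ s : ℝ, |d x s| ≤ D)
    (hBb : ∀ x ∈ Set.Icc 0 adag, ∀ s : ℝ, |B x s| ≤ D)
    (hdLip : ∀ x ∈ Set.Icc 0 adag, ∀ s s' : ℝ, |d x s - d x s'| ≤ L * |s - s'|)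
    (hBLip : ∀ x ∈ Set.Icc 0 adag, ∀ s s' : ℝ, |B x s - B x s'| ≤ L * |s - s'|)
    (hψ1 : ∀ x ∈ Set.Icc 0 adag, |ψ1 x| ≤ ψmax)
    (hψ2 : ∀ x ∈ Set.Icc 0 adag, |ψ2 x| ≤ ψmax) :
    ∃ C > 0, ∃ k₀ > 0, k₀ < 1/2 ∧
      ∀ M' N : ℕ, 0 < M' → 0 < N → ∀ r lam : ℝ, 0 < r → 0 < lam →
      let M := 2*(M'+3); let h := adag / (M : ℝ); let k := T / (N : ℝ);
      k = r * h^2 → k = lam * h → lam + 2*r ≤ 1 → k ≤ k₀ →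
      ∀ (V0 VM W0 WM : ℕ → ℝ) (V W : ℕ → ℕ → ℝ),
        (∀ n ≤ N, ∀ i, 1 ≤ i → i ≤ M-1 → |V n i| ≤ C0) →
        (∀ n ≤ N, ∀ i, 1 ≤ i → i ≤ M-1 → |W n i| ≤ C0) →
        ∀ n, 1 ≤ n → n ≤ N →
          normSq h M (fun i => V n i - W n i)
            ≤ ((1 + C*k)/(1 - 2*k)) * normSq h M (fun i => V (n-1) i - W (n-1) i)
              + (C*k/(1 - 2*k)) *
                (normSq h M (fun i =>
                    phiPi h k M' d ψ1 V0 V VM n i - phiPi h k M' d ψ1 W0 W WM n i)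
                  + (phiP0 h M' B ψ2 V0 V (n-1) - phiP0 h M' B ψ2 W0 W (n-1))^2
                  + h * (phiPM h VM (n-1) - phiPM h WM (n-1))^2) := by
  have hC : 0 < stabilityConst adag D L ψmax C0 := by
    rw [stabilityConst, nonlocalConst]; positivity
  refine ⟨_, hC, 1/4, by norm_num, by norm_num, ?_⟩
  intro M' N _ _ r lam hr hlam M h k hk_r hk_lam hrl hk₀ V0 VM W0 WM V W _ hW n hn hnN
  have hM : (0 : ℝ) < M := by simp only [M]; positivity
  have hh : 0 < h := div_pos hadag hM
  have hk : 0 < k := hk_r ▸ by positivity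
  have hx : ∀ i ∈ Finset.Icc 1 (M - 1), (i : ℝ) * h ∈ Set.Icc 0 adag := fun i hi => by
    have hiM : (i : ℝ) ≤ M := by exact_mod_cast (Finset.mem_Icc.mp hi).2.trans (Nat.sub_le M 1)
    refine ⟨by positivity, ?_⟩
    calc (i : ℝ) * h ≤ M * h := by gcongr
      _ = adag := mul_div_cancel₀ adag hM.ne'
  have hstep := normSq_sub_le_of_phi hh (mul_div_cancel₀ adag hM.ne') hk (by linarith) hr.le
    hlam.le hk_lam.symm hk_r.symm hrl (fun i hi => hdb _ (hx i hi)) (fun i hi => hBb _ (hx i hi))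
    (fun i hi => hdLip _ (hx i hi)) (fun i hi => hBLip _ (hx i hi))
    (fun i hi => hψ1 _ (hx i hi)) (fun i hi => hψ2 _ (hx i hi))
    (fun i hi => hW (n - 1) (by omega) i (Finset.mem_Icc.mp hi).1 (Finset.mem_Icc.mp hi).2)
    (V0 := V0) (VM := VM) (W0 := W0) (WM := WM) (V := V)
  have h2k : 0 < 1 - 2 * k := by linarith
  refine hstep.trans (add_le_add (mul_le_mul_of_nonneg_right
    (le_div_self (by positivity) h2k (by linarith)) (normSq_nonneg hh.le _))
    (mul_le_mul_of_nonneg_right (le_div_self (by positivity) h2k (by linarith)) ?_))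
  have := normSq_nonneg hh.le (M := M)
    (fun i => phiPi h k M' d ψ1 V0 V VM n i - phiPi h k M' d ψ1 W0 W WM n i)
  positivity

/-- One-step stability estimate: under boundedness and Lipschitz assumptions on `d` and `B`,
bounds on `ψ_j`, and the mesh coupling `k = r h² = λ h` with `λ + 2r ≤ 1`, there are
constants `C > 0` and `k₀ ∈ (0, 1/2)`, independent of `h, k, n`, such that for `k ≤ k₀`
and all `V_h, W_h ∈ X_h` with `‖Vⁿ‖_∞ ≤ C_0` and `‖Wⁿ‖_∞ ≤ C_0`, for every `1 ≤ n ≤ N`: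
`‖Vⁿ - Wⁿ‖² ≤ ((1+Ck)/(1-2k)) ‖Vⁿ⁻¹ - Wⁿ⁻¹‖²
  + (Ck/(1-2k)) (‖Pⁿ - Rⁿ‖² + |P_0ⁿ⁻¹ - R_0ⁿ⁻¹|² + h |P_Mⁿ⁻¹ - R_Mⁿ⁻¹|²)`. -/
theorem stmt_11 (adag T D L ψmax C0 : ℝ) (hadag : 0 < adag) (hT : 0 < T)
    (hD : 0 < D) (hL : 0 < L) (hψmax : 0 < ψmax) (hC0 : 0 < C0)
    (d B : ℝ → ℝ → ℝ) (ψ1 ψ2 u0 : ℝ → ℝ)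
    (hdb : ∀ x ∈ Set.Icc 0 adag, ∀ s : ℝ, |d x s| ≤ D)
    (hBb : ∀ x ∈ Set.Icc 0 adag, ∀ s : ℝ, |B x s| ≤ D)
    (hdLip : ∀ x ∈ Set.Icc 0 adag, ∀ s s' : ℝ, |d x s - d x s'| ≤ L * |s - s'|)
    (hBLip : ∀ x ∈ Set.Icc 0 adag, ∀ s s' : ℝ, |B x s - B x s'| ≤ L * |s - s'|)
    (hψ1 : ∀ x ∈ Set.Icc 0 adag, |ψ1 x| ≤ ψmax)
    (hψ2 : ∀ x ∈ Set.Icc 0 adag, |ψ2 x| ≤ ψmax) :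
    ∃ C > 0, ∃ k₀ > 0, k₀ < 1/2 ∧
      ∀ M' N : ℕ, 0 < M' → 0 < N → ∀ r lam : ℝ, 0 < r → 0 < lam →
      let M := 2*(M'+3); let h := adag / (M : ℝ); let k := T / (N : ℝ);
      k = r * h^2 → k = lam * h → lam + 2*r ≤ 1 → k ≤ k₀ →
      ∀ (V0 VM W0 WM : ℕ → ℝ) (V W : ℕ → ℕ → ℝ),
        (∀ n ≤ N, ∀ i, 1 ≤ i → i ≤ M-1 → |V n i| ≤ C0) →
        (∀ n ≤ N, ∀ i, 1 ≤ i → i ≤ M-1 → |W n i| ≤ C0) →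
        ∀ n, 1 ≤ n → n ≤ N →
          normSq h M (fun i => V n i - W n i)
            ≤ ((1 + C*k)/(1 - 2*k)) * normSq h M (fun i => V (n-1) i - W (n-1) i)
              + (C*k/(1 - 2*k)) *
                (normSq h M (fun i =>
                    phiPi h k M' d ψ1 V0 V VM n i - phiPi h k M' d ψ1 W0 W WM n i)
                  + (phiP0 h M' B ψ2 V0 V (n-1) - phiP0 h M' B ψ2 W0 W (n-1))^2
                  + h * (phiPM h VM (n-1) - phiPM h WM (n-1))^2) :=
  stmt_11_general adag T D L ψmax C0 hadag d B ψ1 ψ2 hdb hBb hdLip hBLip hψ1 hψ2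
end
end
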